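/- Let ρ be an elliptic N-function. Then uniformly in a ≥ 0 and λ ∈ [0,1]: ρ_a(λa) ∼ λ²·ρ(a) ∼ (ρ_a)*(λ·ρ'(a)), with implicit constants depending only on the characteristics of ρ. -/

import Mathlib

open Set Filter

/-- An N-function: strictly increasing and convex on `[0,∞)`, vanishing at `0`,
with `ρ(t)/t → 0` as `t → 0⁺` and `t/ρ(t) → 0` as `t → ∞`. -/
def IsNFunction (ρ : ℝ → ℝ) : Prop :=
  ρ 0 = 0 ∧ StrictMonoOn ρ (Ici 0) ∧ ConvexOn ℝ (Ici 0) ρ ∧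
    Tendsto (fun t => ρ t / t) (nhdsWithin 0 (Ioi 0)) (nhds 0) ∧
    Tendsto (fun t => t / ρ t) atTop (nhds 0)

/-- The conjugate (Young/Legendre) function `ρ*(t) = sup_{s ≥ 0} (s t − ρ s)`. -/
noncomputable def conjN (ρ : ℝ → ℝ) (t : ℝ) : ℝ :=
  sSup {y | ∃ s ≥ 0, y = s * t - ρ s}

/-- The shifted N-function `ρ_a(t) = ∫₀ᵗ ρ'(a+τ)/(a+τ) · τ dτ`. -/
noncomputable def shiftN (ρ : ℝ → ℝ) (a : ℝ) (t : ℝ) : ℝ :=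
  ∫ τ in (0:ℝ)..t, deriv ρ (a + τ) / (a + τ) * τ

/-- An elliptic N-function with characteristics `c₁, c₂`: `C¹` on `[0,∞)`,
`C²` on `(0,∞)`, and `ρ'(t) ∼ t ρ''(t)` uniformly in `t > 0`. -/
def IsElliptic (ρ : ℝ → ℝ) (c₁ c₂ : ℝ) : Prop :=
  ContDiffOn ℝ 1 ρ (Ici 0) ∧ ContDiffOn ℝ 2 ρ (Ioi 0) ∧
    ∀ t > 0, c₁ * deriv ρ t ≤ t * deriv (deriv ρ) t ∧
      t * deriv (deriv ρ) t ≤ c₂ * deriv ρ t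

/-!
Ellipticity makes `ρ'(t) t^{-c₂}` decreasing and `ρ'(t) t^{-c₁}` increasing, so `ρ'` is doubling
and grows at least like `t^{c₁}`; together with convexity this gives `ρ(a) ∼ a ρ'(a)`.
On `[0, a]` the integrand of `ρ_a` is comparable to `ρ'(a) τ / a`, whence `ρ_a(λa) ∼ λ² a ρ'(a)`.
For the conjugate, `ρ_a(s) ≥ ρ'(a) s² / (2(a + s))` and AM-GM bound `s λ ρ'(a) - ρ_a(s)` by
`λ² a ρ'(a)` up to constants when `s ≲ a`, while for `s ≫ a` the growth of `ρ'` gives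
`ρ_a(s) ≥ s ρ'(a)`; the lower bound comes from testing the supremum at `s = λ a / 2^{c₂}`.
-/

section RpowGrowth

variable {f f' : ℝ → ℝ} {c x y : ℝ}

theorem antitoneOn_mul_rpow_neg_of_mul_deriv_le (hf : ∀ t > 0, HasDerivAt f (f' t) t)
    (h : ∀ t > 0, t * f' t ≤ c * f t) : AntitoneOn (fun t => f t * t ^ (-c)) (Ioi 0) := by
  have hderiv : ∀ t ∈ Ioi (0:ℝ), HasDerivAt (fun t => f t * t ^ (-c))
      (f' t * t ^ (-c) + f t * (-c * t ^ (-c - 1))) t := fun t ht =>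
    (hf t ht).mul (Real.hasDerivAt_rpow_const (Or.inl (ne_of_gt ht)))
  refine antitoneOn_of_hasDerivWithinAt_nonpos (convex_Ioi 0)
    (fun t ht => (hderiv t ht).continuousAt.continuousWithinAt)
    (fun t ht => by rw [interior_Ioi] at ht ⊢; exact (hderiv t ht).hasDerivWithinAt)
    (fun t ht => ?_)
  rw [interior_Ioi] at ht
  have ht : (0:ℝ) < t := ht
  -- the derivative is `t ^ (-c - 1) * (t * f' t - c * f t)`
  have hsplit : t ^ (-c) = t ^ (-c - 1) * t := by
    rw [← Real.rpow_add_one ht.ne']; ring_nf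
  rw [hsplit]
  nlinarith [mul_nonneg (Real.rpow_nonneg ht.le (-c - 1)) (sub_nonneg.2 (h t ht))]

theorem le_div_rpow_mul_of_mul_deriv_le (hf : ∀ t > 0, HasDerivAt f (f' t) t)
    (h : ∀ t > 0, t * f' t ≤ c * f t) (hx : 0 < x) (hxy : x ≤ y) :
    f y ≤ (y / x) ^ c * f x := by
  have hy : 0 < y := hx.trans_le hxy
  have key := antitoneOn_mul_rpow_neg_of_mul_deriv_le hf h hx hy hxy
  simp only [Real.rpow_neg hx.le, Real.rpow_neg hy.le, ← div_eq_mul_inv] at key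
  rw [div_le_div_iff₀ (Real.rpow_pos_of_pos hy c) (Real.rpow_pos_of_pos hx c)] at key
  rw [Real.div_rpow hy.le hx.le, div_mul_eq_mul_div, le_div_iff₀ (Real.rpow_pos_of_pos hx c)]
  linarith

theorem div_rpow_mul_le_of_le_mul_deriv (hf : ∀ t > 0, HasDerivAt f (f' t) t)
    (h : ∀ t > 0, c * f t ≤ t * f' t) (hx : 0 < x) (hxy : x ≤ y) :
    (y / x) ^ c * f x ≤ f y := by
  simpa using le_div_rpow_mul_of_mul_deriv_le (f := -f) (f' := -f') (fun t ht => (hf t ht).neg)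
    (fun t ht => by simpa using h t ht) hx hxy

end RpowGrowth

section ConjN

variable {f : ℝ → ℝ} {t M : ℝ}

theorem conjN_le (h : ∀ s ≥ 0, s * t - f s ≤ M) : conjN f t ≤ M :=
  csSup_le ⟨_, 0, le_rfl, rfl⟩ (by rintro y ⟨s, hs, rfl⟩; exact h s hs)

theorem le_conjN (h : ∀ s ≥ 0, s * t - f s ≤ M) {s : ℝ} (hs : 0 ≤ s) :
    s * t - f s ≤ conjN f t :=
  le_csSup ⟨M, by rintro y ⟨s, hs, rfl⟩; exact h s hs⟩ ⟨s, hs, rfl⟩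

theorem conjN_zero (hf0 : f 0 = 0) (hf : ∀ s ≥ 0, 0 ≤ f s) : conjN f 0 = 0 := by
  have hbound : ∀ s ≥ 0, s * 0 - f s ≤ 0 := fun s hs => by linarith [hf s hs]
  refine le_antisymm (conjN_le hbound) ?_
  simpa [hf0] using le_conjN hbound le_rfl

end ConjN

namespace IsElliptic

variable {ρ : ℝ → ℝ} {c₁ c₂ x y : ℝ}

theorem differentiableAt (hE : IsElliptic ρ c₁ c₂) (hx : 0 < x) : DifferentiableAt ℝ ρ x :=
  (hE.2.1.differentiableOn two_ne_zero).differentiableAt (isOpen_Ioi.mem_nhds hx)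

theorem hasDerivAt_deriv (hE : IsElliptic ρ c₁ c₂) (hx : 0 < x) :
    HasDerivAt (deriv ρ) (deriv (deriv ρ) x) x :=
  (((hE.2.1.deriv_of_isOpen isOpen_Ioi (by norm_num)).differentiableOn one_ne_zero).differentiableAt
    (isOpen_Ioi.mem_nhds hx)).hasDerivAt

theorem deriv_le_div_rpow_mul (hE : IsElliptic ρ c₁ c₂) (hx : 0 < x) (hxy : x ≤ y) :
    deriv ρ y ≤ (y / x) ^ c₂ * deriv ρ x :=
  le_div_rpow_mul_of_mul_deriv_le (fun _ ht => hE.hasDerivAt_deriv ht)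
    (fun t ht => (hE.2.2 t ht).2) hx hxy

theorem div_rpow_mul_le_deriv (hE : IsElliptic ρ c₁ c₂) (hx : 0 < x) (hxy : x ≤ y) :
    (y / x) ^ c₁ * deriv ρ x ≤ deriv ρ y :=
  div_rpow_mul_le_of_le_mul_deriv (fun _ ht => hE.hasDerivAt_deriv ht)
    (fun t ht => (hE.2.2 t ht).1) hx hxy

theorem deriv_two_mul_le (hE : IsElliptic ρ c₁ c₂) (hx : 0 < x) :
    deriv ρ (2 * x) ≤ 2 ^ c₂ * deriv ρ x := by
  simpa [hx.ne'] using hE.deriv_le_div_rpow_mul hx (by linarith : x ≤ 2 * x)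

theorem four_mul_deriv_le (hE : IsElliptic ρ c₁ c₂) (hc₁ : 0 < c₁) (hx : 0 < x)
    (hxy : 4 ^ c₁⁻¹ * x ≤ y) (hφ : 0 ≤ deriv ρ x) : 4 * deriv ρ x ≤ deriv ρ y := by
  have h4 : (4:ℝ) ≤ (y / x) ^ c₁ := by
    calc (4:ℝ) = ((4:ℝ) ^ c₁⁻¹) ^ c₁ := by
          rw [← Real.rpow_mul (by norm_num), inv_mul_cancel₀ hc₁.ne', Real.rpow_one]
    _ ≤ (y / x) ^ c₁ := Real.rpow_le_rpow (by positivity) (by rwa [le_div_iff₀ hx]) hc₁.le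
  have hxy' : x ≤ y := le_trans (le_mul_of_one_le_left hx.le (Real.one_le_rpow (by norm_num)
    (by positivity))) hxy
  exact (mul_le_mul_of_nonneg_right h4 hφ).trans (hE.div_rpow_mul_le_deriv hx hxy')

end IsElliptic

namespace IsNFunction

variable {ρ : ℝ → ℝ} {c₁ c₂ x : ℝ}

theorem nonneg (hN : IsNFunction ρ) (hx : 0 ≤ x) : 0 ≤ ρ x := by
  simpa [hN.1] using hN.2.1.monotoneOn self_mem_Ici hx hx

theorem deriv_zero (hN : IsNFunction ρ) : deriv ρ 0 = 0 := by
  by_cases h : DifferentiableAt ℝ ρ 0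
  · have hslope := (hasDerivWithinAt_iff_tendsto_slope' (notMem_Ioi.2 le_rfl)).1
      h.hasDerivAt.hasDerivWithinAt
    refine tendsto_nhds_unique (hslope.congr' ?_) hN.2.2.2.1
    filter_upwards with t
    rw [slope_def_field, hN.1, sub_zero, sub_zero]
  · exact deriv_zero_of_not_differentiableAt h

theorem div_le_deriv (hN : IsNFunction ρ) (hE : IsElliptic ρ c₁ c₂) (hx : 0 < x) :
    ρ x / x ≤ deriv ρ x := by
  simpa [slope_def_field, hN.1] using
    hN.2.2.1.slope_le_deriv self_mem_Ici hx.le hx (hE.differentiableAt hx)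

theorem deriv_nonneg (hN : IsNFunction ρ) (hE : IsElliptic ρ c₁ c₂) (hx : 0 < x) :
    0 ≤ deriv ρ x :=
  (div_nonneg (hN.nonneg hx.le) hx.le).trans (hN.div_le_deriv hE hx)

theorem le_mul_deriv (hN : IsNFunction ρ) (hE : IsElliptic ρ c₁ c₂) (hx : 0 < x) :
    ρ x ≤ x * deriv ρ x := by
  have := hN.div_le_deriv hE hx
  rwa [div_le_iff₀ hx, mul_comm] at this

theorem monotoneOn_deriv (hN : IsNFunction ρ) (hE : IsElliptic ρ c₁ c₂) :
    MonotoneOn (deriv ρ) (Ioi 0) :=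
  (hN.2.2.1.subset Ioi_subset_Ici_self (convex_Ioi 0)).monotoneOn_deriv
    fun _ hx => hE.differentiableAt hx

theorem mul_deriv_le (hN : IsNFunction ρ) (hE : IsElliptic ρ c₁ c₂) (hx : 0 < x) :
    x * deriv ρ x ≤ 2 * 2 ^ c₂ * ρ x := by
  have hx2 : 0 < x / 2 := by positivity
  -- convexity bounds `ρ'(x/2)` by the slope of `ρ` over `[x/2, x]`
  have hslope : x / 2 * deriv ρ (x / 2) ≤ ρ x - ρ (x / 2) := by
    have := hN.2.2.1.deriv_le_slope hx2.le hx.le (by linarith) (hE.differentiableAt hx2)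
    rw [slope_def_field, le_div_iff₀ (by linarith)] at this
    linarith
  have hdouble := hE.deriv_two_mul_le hx2
  rw [mul_div_cancel₀ x two_ne_zero] at hdouble
  have hρ := hN.nonneg hx2.le
  have hB : (0:ℝ) ≤ 2 ^ c₂ := by positivity
  nlinarith [mul_le_mul_of_nonneg_left hdouble hx.le, mul_le_mul_of_nonneg_left hslope hB]

end IsNFunction

section ShiftN

variable {ρ : ℝ → ℝ} {c₁ c₂ a s : ℝ}

@[simp]
theorem shiftN_zero : shiftN ρ a 0 = 0 := intervalIntegral.integral_same

theorem intervalIntegrable_shiftN_integrand (hE : IsElliptic ρ c₁ c₂) (ha : 0 < a) {u v : ℝ}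
    (hu : 0 ≤ u) (hv : 0 ≤ v) :
    IntervalIntegrable (fun τ => deriv ρ (a + τ) / (a + τ) * τ) MeasureTheory.volume u v := by
  refine ContinuousOn.intervalIntegrable fun τ hτ => ContinuousAt.continuousWithinAt ?_
  have hτ : 0 < a + τ := by
    have := (le_min hu hv).trans hτ.1
    linarith
  have hφ : ContinuousAt (deriv ρ) (a + τ) := (hE.hasDerivAt_deriv hτ).continuousAt
  exact ((hφ.comp (by fun_prop)).div (by fun_prop) hτ.ne').mul continuousAt_id

theorem shiftN_nonneg (hN : IsNFunction ρ) (hE : IsElliptic ρ c₁ c₂) (ha : 0 ≤ a)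
    (hs : 0 ≤ s) : 0 ≤ shiftN ρ a s := by
  refine intervalIntegral.integral_nonneg hs fun τ hτ => ?_
  rcases hτ.1.eq_or_lt with rfl | hτ0
  · simp
  · have hpos : 0 < a + τ := by linarith
    exact mul_nonneg (div_nonneg (hN.deriv_nonneg hE hpos) hpos.le) hτ.1

theorem shiftN_le (hN : IsNFunction ρ) (hE : IsElliptic ρ c₁ c₂) (ha : 0 < a) (hs : 0 ≤ s) :
    shiftN ρ a s ≤ deriv ρ (a + s) / a * (s ^ 2 / 2) := by
  have hbound : ∀ τ ∈ Icc 0 s, deriv ρ (a + τ) / (a + τ) * τ ≤ deriv ρ (a + s) / a * τ := by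
    intro τ ⟨hτ0, hτs⟩
    have hφ : deriv ρ (a + τ) ≤ deriv ρ (a + s) :=
      hN.monotoneOn_deriv hE (by simp; linarith) (by simp; linarith) (by linarith)
    exact mul_le_mul_of_nonneg_right
      (div_le_div₀ ((hN.deriv_nonneg hE (by linarith)).trans hφ) hφ ha (by linarith)) hτ0
  calc shiftN ρ a s ≤ ∫ τ in (0:ℝ)..s, deriv ρ (a + s) / a * τ :=
        intervalIntegral.integral_mono_on hs (intervalIntegrable_shiftN_integrand hE ha le_rfl hs)
          ((continuous_const_mul _).intervalIntegrable _ _) hbound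
  _ = deriv ρ (a + s) / a * (s ^ 2 / 2) := by
        rw [intervalIntegral.integral_const_mul, integral_id]; ring

theorem le_shiftN (hN : IsNFunction ρ) (hE : IsElliptic ρ c₁ c₂) (ha : 0 < a) (hs : 0 ≤ s) :
    deriv ρ a / (a + s) * (s ^ 2 / 2) ≤ shiftN ρ a s := by
  have hbound : ∀ τ ∈ Icc 0 s, deriv ρ a / (a + s) * τ ≤ deriv ρ (a + τ) / (a + τ) * τ := by
    intro τ ⟨hτ0, hτs⟩
    have hφ : deriv ρ a ≤ deriv ρ (a + τ) :=
      hN.monotoneOn_deriv hE ha (by simp; linarith) (by linarith)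
    exact mul_le_mul_of_nonneg_right
      (div_le_div₀ ((hN.deriv_nonneg hE ha).trans hφ) hφ (by linarith) (by linarith)) hτ0
  calc deriv ρ a / (a + s) * (s ^ 2 / 2) = ∫ τ in (0:ℝ)..s, deriv ρ a / (a + s) * τ := by
        rw [intervalIntegral.integral_const_mul, integral_id]; ring
  _ ≤ shiftN ρ a s :=
        intervalIntegral.integral_mono_on hs ((continuous_const_mul _).intervalIntegrable _ _)
          (intervalIntegrable_shiftN_integrand hE ha le_rfl hs) hbound

theorem deriv_mul_le_shiftN (hN : IsNFunction ρ) (hE : IsElliptic ρ c₁ c₂) (ha : 0 < a)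
    (has : 2 * a ≤ s) : deriv ρ (s / 2) * s / 4 ≤ shiftN ρ a s := by
  have hs : 0 < s := by linarith
  -- on `[s/2, s]` the weight `τ / (a + τ)` is at least `1/2`, since `τ ≥ a` there
  have hbound : ∀ τ ∈ Icc (s / 2) s, deriv ρ (s / 2) / 2 ≤ deriv ρ (a + τ) / (a + τ) * τ := by
    intro τ ⟨hτ1, hτ2⟩
    have hφ : deriv ρ (s / 2) ≤ deriv ρ (a + τ) :=
      hN.monotoneOn_deriv hE (by simp; linarith) (by simp; linarith) (by linarith)
    have hφ0 := hN.deriv_nonneg hE (by linarith : 0 < s / 2)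
    rw [div_mul_eq_mul_div, le_div_iff₀ (by linarith)]
    nlinarith
  have hhalf : (s - s / 2) * deriv ρ (s / 2) / 2 ≤
      ∫ τ in (s / 2)..s, deriv ρ (a + τ) / (a + τ) * τ := by
    simpa using intervalIntegral.integral_mono_on (by linarith) intervalIntegrable_const
      (intervalIntegrable_shiftN_integrand hE ha (by linarith) hs.le) hbound
  have hsplit := intervalIntegral.integral_add_adjacent_intervals
    (intervalIntegrable_shiftN_integrand hE ha le_rfl (by linarith : (0:ℝ) ≤ s / 2))
    (intervalIntegrable_shiftN_integrand hE ha (by linarith) hs.le)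
  have hfirst := shiftN_nonneg hN hE ha.le (by linarith : (0:ℝ) ≤ s / 2)
  unfold shiftN at hfirst ⊢
  rw [← hsplit]
  linarith

end ShiftN

section Bounds

variable {ρ : ℝ → ℝ} {c₁ c₂ a lam s : ℝ}

theorem shiftN_le_of_le (hN : IsNFunction ρ) (hE : IsElliptic ρ c₁ c₂) (ha : 0 < a)
    (hs : 0 ≤ s) (hsa : s ≤ a) : shiftN ρ a s ≤ 2 ^ c₂ * deriv ρ a * s ^ 2 / (2 * a) := by
  have hφ : deriv ρ (a + s) ≤ 2 ^ c₂ * deriv ρ a :=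
    (hN.monotoneOn_deriv hE (by simp; linarith) (by simp; linarith) (by linarith)).trans
      (hE.deriv_two_mul_le ha)
  calc shiftN ρ a s ≤ deriv ρ (a + s) / a * (s ^ 2 / 2) := shiftN_le hN hE ha hs
  _ ≤ 2 ^ c₂ * deriv ρ a / a * (s ^ 2 / 2) := by gcongr
  _ = 2 ^ c₂ * deriv ρ a * s ^ 2 / (2 * a) := by ring

theorem shiftN_mul_le (hN : IsNFunction ρ) (hE : IsElliptic ρ c₁ c₂) (ha : 0 < a)
    (hl0 : 0 ≤ lam) (hl1 : lam ≤ 1) :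
    shiftN ρ a (lam * a) ≤ 2 ^ c₂ * 2 ^ c₂ * (lam ^ 2 * ρ a) := by
  calc shiftN ρ a (lam * a) ≤ 2 ^ c₂ * deriv ρ a * (lam * a) ^ 2 / (2 * a) :=
        shiftN_le_of_le hN hE ha (by positivity) (mul_le_of_le_one_left ha.le hl1)
  _ = 2 ^ c₂ * lam ^ 2 * (a * deriv ρ a) / 2 := by field_simp
  _ ≤ 2 ^ c₂ * lam ^ 2 * (2 * 2 ^ c₂ * ρ a) / 2 := by
        gcongr 2 ^ c₂ * lam ^ 2 * ?_ / 2; exact hN.mul_deriv_le hE ha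
  _ = 2 ^ c₂ * 2 ^ c₂ * (lam ^ 2 * ρ a) := by ring

theorem le_shiftN_mul (hN : IsNFunction ρ) (hE : IsElliptic ρ c₁ c₂) (ha : 0 < a)
    (hl0 : 0 ≤ lam) (hl1 : lam ≤ 1) : lam ^ 2 * ρ a ≤ 4 * shiftN ρ a (lam * a) := by
  have hφ := hN.deriv_nonneg hE ha
  calc lam ^ 2 * ρ a ≤ lam ^ 2 * (a * deriv ρ a) := by gcongr; exact hN.le_mul_deriv hE ha
  _ = 4 * (deriv ρ a / (2 * a) * ((lam * a) ^ 2 / 2)) := by field_simp; ring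
  _ ≤ 4 * (deriv ρ a / (a + lam * a) * ((lam * a) ^ 2 / 2)) := by
        gcongr; linarith [mul_le_of_le_one_left ha.le hl1]
  _ ≤ 4 * shiftN ρ a (lam * a) := by gcongr; exact le_shiftN hN hE ha (by positivity)

theorem mul_sub_shiftN_le (hc₁ : 0 < c₁) (hN : IsNFunction ρ) (hE : IsElliptic ρ c₁ c₂)
    (ha : 0 < a) (hl1 : lam ≤ 1) (hs : 0 ≤ s) :
    s * (lam * deriv ρ a) - shiftN ρ a s ≤ (2 * 4 ^ c₁⁻¹ + 1) * 2 ^ c₂ * (lam ^ 2 * ρ a) := by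
  set K : ℝ := 2 * 4 ^ c₁⁻¹
  have hφ := hN.deriv_nonneg hE ha
  have hρ := hN.nonneg ha.le
  rcases le_or_gt s (K * a) with hsK | hsK
  · -- AM-GM: `s λ ≤ s² / (2 (a + s)) + (a + s) λ² / 2`
    have hamgm : s * (lam * deriv ρ a) ≤
        deriv ρ a / (a + s) * (s ^ 2 / 2) + (a + s) * lam ^ 2 * deriv ρ a / 2 := by
      have hsq : 0 ≤ deriv ρ a * (s - (a + s) * lam) ^ 2 / (2 * (a + s)) := by positivity
      have hid : deriv ρ a / (a + s) * (s ^ 2 / 2) + (a + s) * lam ^ 2 * deriv ρ a / 2 -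
          s * (lam * deriv ρ a) = deriv ρ a * (s - (a + s) * lam) ^ 2 / (2 * (a + s)) := by
        field_simp; ring
      linarith
    have hrest : (a + s) * lam ^ 2 * deriv ρ a / 2 ≤ (K + 1) * 2 ^ c₂ * (lam ^ 2 * ρ a) := by
      calc (a + s) * lam ^ 2 * deriv ρ a / 2 ≤ (K + 1) * lam ^ 2 * (a * deriv ρ a) / 2 := by
            nlinarith [mul_nonneg (sq_nonneg lam) hφ]
      _ ≤ (K + 1) * lam ^ 2 * (2 * 2 ^ c₂ * ρ a) / 2 := by
            gcongr (K + 1) * lam ^ 2 * ?_ / 2; exact hN.mul_deriv_le hE ha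
      _ = (K + 1) * 2 ^ c₂ * (lam ^ 2 * ρ a) := by ring
    linarith [le_shiftN hN hE ha hs]
  · -- far out, `ρ_a(s) ≥ ρ'(a) s` already dominates `s λ ρ'(a)`
    have hK : 2 ≤ K := le_mul_of_one_le_right zero_le_two (Real.one_le_rpow (by norm_num)
      (by positivity))
    have h4 : 4 * deriv ρ a ≤ deriv ρ (s / 2) :=
      hE.four_mul_deriv_le hc₁ ha (by linarith) hφ
    have hfar := deriv_mul_le_shiftN (s := s) hN hE ha (by nlinarith)
    have hsφ : s * (lam * deriv ρ a) ≤ s * deriv ρ a := by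
      gcongr; exact mul_le_of_le_one_left hφ hl1
    have : 0 ≤ (K + 1) * 2 ^ c₂ * (lam ^ 2 * ρ a) := by positivity
    nlinarith

theorem conjN_shiftN_le (hc₁ : 0 < c₁) (hN : IsNFunction ρ) (hE : IsElliptic ρ c₁ c₂)
    (ha : 0 < a) (hl1 : lam ≤ 1) :
    conjN (shiftN ρ a) (lam * deriv ρ a) ≤ (2 * 4 ^ c₁⁻¹ + 1) * 2 ^ c₂ * (lam ^ 2 * ρ a) :=
  conjN_le fun _ hs => mul_sub_shiftN_le hc₁ hN hE ha hl1 hs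

theorem le_conjN_shiftN (hc₁ : 0 < c₁) (hc₂ : 0 < c₂) (hN : IsNFunction ρ)
    (hE : IsElliptic ρ c₁ c₂) (ha : 0 < a) (hl0 : 0 ≤ lam) (hl1 : lam ≤ 1) :
    lam ^ 2 * ρ a ≤ 2 * 2 ^ c₂ * conjN (shiftN ρ a) (lam * deriv ρ a) := by
  set B : ℝ := 2 ^ c₂
  have hB : 1 ≤ B := Real.one_le_rpow (by norm_num) hc₂.le
  -- test the supremum at `s = λ a / B`
  have hs : lam * a / B ≤ a := div_le_of_le_mul₀ (by positivity) ha.le (by nlinarith)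
  have hshift := shiftN_le_of_le hN hE ha (by positivity) hs
  have hsup := le_conjN (fun _ hs => mul_sub_shiftN_le hc₁ hN hE ha hl1 hs)
    (by positivity : 0 ≤ lam * a / B)
  calc lam ^ 2 * ρ a ≤ lam ^ 2 * (a * deriv ρ a) := by gcongr; exact hN.le_mul_deriv hE ha
  _ = 2 * B * (lam * a / B * (lam * deriv ρ a) - B * deriv ρ a * (lam * a / B) ^ 2 / (2 * a)) := by
        field_simp; ring
  _ ≤ 2 * B * conjN (shiftN ρ a) (lam * deriv ρ a) := by gcongr; linarith

end Bounds

/-- For an elliptic N-function `ρ`, uniformly in `a ≥ 0` and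
`λ ∈ [0,1]`: `ρ_a(λ a) ∼ λ² ρ(a) ∼ (ρ_a)*(λ ρ'(a))`, with constants depending
only on the characteristics of `ρ`. -/
theorem statement8 (ρ : ℝ → ℝ) (c₁ c₂ : ℝ) (hc₁ : 0 < c₁) (hc₂ : 0 < c₂)
    (hN : IsNFunction ρ) (hE : IsElliptic ρ c₁ c₂) :
    ∃ C > 0, ∀ a ≥ (0:ℝ), ∀ lam ∈ Set.Icc (0:ℝ) 1,
      shiftN ρ a (lam * a) ≤ C * (lam ^ 2 * ρ a) ∧
      lam ^ 2 * ρ a ≤ C * shiftN ρ a (lam * a) ∧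
      conjN (shiftN ρ a) (lam * deriv ρ a) ≤ C * (lam ^ 2 * ρ a) ∧
      lam ^ 2 * ρ a ≤ C * conjN (shiftN ρ a) (lam * deriv ρ a) := by
  set B : ℝ := 2 ^ c₂
  set K : ℝ := 2 * 4 ^ c₁⁻¹
  have hB : 0 < B := by positivity
  have hBB : 0 ≤ B * B := by positivity
  have hKB : 0 ≤ (K + 1) * B := by positivity
  have enlarge : ∀ {c X Y : ℝ}, c ≤ B * B + 4 + (K + 1) * B + 2 * B → 0 ≤ Y → X ≤ c * Y →
      X ≤ (B * B + 4 + (K + 1) * B + 2 * B) * Y :=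
    fun hc hY h => h.trans (mul_le_mul_of_nonneg_right hc hY)
  refine ⟨B * B + 4 + (K + 1) * B + 2 * B, by positivity, fun a ha lam ⟨hl0, hl1⟩ => ?_⟩
  rcases ha.eq_or_lt with rfl | ha
  · have hconj : conjN (shiftN ρ 0) 0 = 0 :=
      conjN_zero shiftN_zero fun s hs => shiftN_nonneg hN hE le_rfl hs
    simp [hN.1, hN.deriv_zero, hconj]
  have hρ : 0 ≤ lam ^ 2 * ρ a := by have := hN.nonneg ha.le; positivity
  have hconj : 0 ≤ conjN (shiftN ρ a) (lam * deriv ρ a) := by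
    simpa using le_conjN (fun _ hs => mul_sub_shiftN_le hc₁ hN hE ha hl1 hs) le_rfl
  refine ⟨enlarge ?_ hρ (shiftN_mul_le hN hE ha hl0 hl1),
    enlarge ?_ (shiftN_nonneg hN hE ha.le (by positivity)) (le_shiftN_mul hN hE ha hl0 hl1),
    enlarge ?_ hρ (conjN_shiftN_le hc₁ hN hE ha hl1),
    enlarge ?_ hconj (le_conjN_shiftN hc₁ hc₂ hN hE ha hl0 hl1)⟩ <;> linarith
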